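/- Let (G,P) be a network with symmetry groupoid 𝔾. The space V(G,P) of groupoid-invariant virtual vector fields is linearly isomorphic to the product ⊓_{[a] ∈ 𝔾₀/𝔾₁} Ctrl(P I(a) → Pa)^{Aut(a)}, taken over a set of representatives of the isomorphism classes of objects, where Ctrl(P I(a) → Pa)^{Aut(a)} denotes the subspace of vectors fixed by the automorphism group Aut(a) acting via Ctrl. The isomorphism is given by restriction w ↦ (w_{a₁},…,w_{a_N}) for chosen representatives a₁,…,a_N. -/

import Mathlib

/-!
An invariant section is determined by its values at the representatives, since every vertex
is isomorphic to one of them and `w_a = Ctrl(σ⁻¹) w_{a_i}` for `σ : I(a) → I(a_i)`.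
Conversely, a vector `v` fixed by `Aut(a_i)` can be transported along any isomorphism out of
`I(a_i)`: two such isomorphisms differ by an automorphism of `I(a_i)`, so by functoriality of
`Ctrl` the result does not depend on the choice, and since distinct representatives are not
isomorphic this yields a groupoid-invariant section. It is smooth because each `Ctrl(σ)` is
conjugation by diffeomorphisms (casts) of the phase spaces.
-/

open Manifold

structure DGraph where
  V : Type
  E : Type
  src : E → V
  tgt : E → V

/-- A map of directed multigraphs: functions on edges and vertices commuting with
source and target. -/
structure GraphMap (G G' : DGraph) where
  vmap : G.V → G'.V
  emap : G.E → G'.E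
  src_eq : ∀ e, G'.src (emap e) = vmap (G.src e)
  tgt_eq : ∀ e, G'.tgt (emap e) = vmap (G.tgt e)

/-- `φ` is a graph fibration if for every vertex `a` of `G` and every edge `e'` of `G'`
with target `φ(a)`, there is a unique edge `e` of `G` with target `a` and `φ(e) = e'`. -/
def GraphMap.IsFibration {G G' : DGraph} (φ : GraphMap G G') : Prop :=
  ∀ (a : G.V) (e' : G'.E), G'.tgt e' = φ.vmap a →
    ∃! e : G.E, G.tgt e = a ∧ φ.emap e = e'

/-- The set of edges of `G` with target `a`. -/
abbrev inEdges (G : DGraph) (a : G.V) : Type := {e : G.E // G.tgt e = a}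

/-- The input tree `I(a)` of a vertex `a`: its vertices are `{a} ⊔ t⁻¹(a)` (the root `a`
is encoded as `none`, the leaf `γ ∈ t⁻¹(a)` as `some γ`), its edges are the pairs `(a, γ)`
for `γ ∈ t⁻¹(a)`, with source `γ` and target the root `a`. -/
def inputTree (G : DGraph) (a : G.V) : DGraph where
  V := Option (inEdges G a)
  E := inEdges G a
  src := fun γ => some γ
  tgt := fun _ => none

/-- An isomorphism of graphs is a graph map bijective on vertices and on edges. -/
def GraphMap.IsIso {G G' : DGraph} (φ : GraphMap G G') : Prop :=
  Function.Bijective φ.vmap ∧ Function.Bijective φ.emap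

/-- An isomorphism of input networks `(I(a), P ∘ ξ_a) → (I(a'), P' ∘ ξ_{a'})`.
Since any isomorphism of height-1 trees sends root to root and is determined by its
action on the leaves (equivalently, on the edges), it is given by a bijection `e` of the
sets of incoming edges; the network (phase-preserving) condition says that the root
phases agree (`hr`) and the phases of corresponding leaves agree (`hl`). -/
structure InputIso {ι : Type} (G : DGraph) (P : G.V → ι) (G' : DGraph) (P' : G'.V → ι)
    (a : G.V) (a' : G'.V) where
  e : inEdges G a ≃ inEdges G' a'
  hr : P' a' = P a
  hl : ∀ γ : inEdges G a, P' (G'.src ((e γ) : inEdges G' a').1) = P (G.src γ.1)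

/-- The identity isomorphism of an input network. -/
def InputIso.refl {ι : Type} (G : DGraph) (P : G.V → ι) (a : G.V) :
    InputIso G P G P a a :=
  ⟨Equiv.refl _, rfl, fun _ => rfl⟩

/-- Composition of isomorphisms of input networks. -/
def InputIso.comp {ι : Type} {G : DGraph} {P : G.V → ι} {G' : DGraph} {P' : G'.V → ι}
    {G'' : DGraph} {P'' : G''.V → ι} {a : G.V} {a' : G'.V} {a'' : G''.V}
    (σ : InputIso G P G' P' a a') (σ' : InputIso G' P' G'' P'' a' a'') :
    InputIso G P G'' P'' a a'' :=
  ⟨σ.e.trans σ'.e, σ'.hr.trans σ.hr, fun γ => (σ'.hl (σ.e γ)).trans (σ.hl γ)⟩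

/-- The inverse of an isomorphism of input networks. -/
def InputIso.inv {ι : Type} {G : DGraph} {P : G.V → ι} {G' : DGraph} {P' : G'.V → ι}
    {a : G.V} {a' : G'.V} (σ : InputIso G P G' P' a a') : InputIso G' P' G P a' a :=
  ⟨σ.e.symm, σ.hr.symm, fun γ' => by
    have h := σ.hl (σ.e.symm γ')
    rw [Equiv.apply_symm_apply] at h
    exact h.symm⟩

variable {ι : Type} {EE : ι → Type} [∀ i, NormedAddCommGroup (EE i)]
  [∀ i, NormedSpace ℝ (EE i)] {HH : ι → Type} [∀ i, TopologicalSpace (HH i)]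
  (II : ∀ i, ModelWithCorners ℝ (EE i) (HH i))
  (MM : ι → Type) [∀ i, TopologicalSpace (MM i)] [∀ i, ChartedSpace (HH i) (MM i)]
  [∀ i, IsManifold (II i) (⊤ : ℕ∞) (MM i)]

/-- The total phase space `P I(a) = P(a) × ⊓_{γ ∈ t⁻¹(a)} P(s(γ))` of the input network
of the vertex `a` of the network `(G, P)` (phase spaces drawn from the family of
manifolds `MM` via the index function `P : G.V → ι`). -/
abbrev PIn (G : DGraph) (P : G.V → ι) (a : G.V) : Type :=
  MM (P a) × ((γ : inEdges G a) → MM (P (G.src γ.1)))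

/-- The underlying (not necessarily smooth) sections of the control space
`Ctrl(P I(a) → P a)`: maps `F` from `P I(a)` to the tangent bundle of `P a = P(a)` with
`F q ∈ T_{p(q)} P(a)`, where `p : P I(a) → P(a)` is the projection onto the root factor. -/
abbrev Raw (G : DGraph) (P : G.V → ι) (a : G.V) : Type :=
  (q : PIn MM G P a) → TangentSpace (II (P a)) q.1

/-- The model with corners for the manifold `P I(a)`. -/
noncomputable def PInModel (G : DGraph) [Fintype G.E] [DecidableEq G.V]
    (P : G.V → ι) (a : G.V) :
    ModelWithCorners ℝ (EE (P a) × ((γ : inEdges G a) → EE (P (G.src γ.1))))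
      (ModelProd (HH (P a)) (ModelPi fun γ : inEdges G a => HH (P (G.src γ.1)))) :=
  (II (P a)).prod (ModelWithCorners.pi fun γ : inEdges G a => II (P (G.src γ.1)))

/-- Smoothness of an element of `Ctrl(P I(a) → P a)`, as a map into the tangent bundle.
`Ctrl(P I(a) → P a)` is the vector space of smooth maps `F : P I(a) → T P(a)` with
`F q ∈ T_{p(q)} P(a)`, i.e. the subspace of smooth elements of `Raw`. -/
def IsSmoothCtrl (G : DGraph) [Fintype G.E] [DecidableEq G.V] (P : G.V → ι) (a : G.V)
    (F : Raw II MM G P a) : Prop :=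
  ContMDiff (PInModel II G P a) (II (P a)).tangent (⊤ : ℕ∞)
    (fun q => Bundle.TotalSpace.mk q.1 (F q) :
      PIn MM G P a → TangentBundle (II (P a)) (MM (P a)))

/-- The map `P φ : P I(a') → P I(a)` of total phase spaces of input networks induced
(contravariantly) by an isomorphism `φ` of input networks. -/
def phaseIn {G : DGraph} {P : G.V → ι} {G' : DGraph} {P' : G'.V → ι} {a : G.V}
    {a' : G'.V} (σ : InputIso G P G' P' a a') : PIn MM G' P' a' → PIn MM G P a :=
  fun q => (cast (congrArg MM σ.hr) q.1,
    fun γ => cast (congrArg MM (σ.hl γ)) (q.2 (σ.e γ)))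

/-- Transport of tangent vectors along an equality of phase space indices; this is the
differential of the induced diffeomorphism of phase spaces (a `cast`). -/
def tcast {i j : ι} (h : i = j) {x : MM i} {y : MM j} (v : TangentSpace (II i) x) :
    TangentSpace (II j) y :=
  cast (congrArg EE h) v

/-- The map `Ctrl(φ) : Ctrl(P I(a) → P a) → Ctrl(P I(a') → P a')`,
`Ctrl(φ)(F) = D(P(φ|ₐ))⁻¹ ∘ F ∘ P φ`, induced by an isomorphism `φ` of input networks:
here `P(φ|ₐ) : P(a') → P(a)` is the diffeomorphism (a `cast`) induced by the restriction
of `φ` to the root, and its differential is `tcast`. -/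
def ctrlMap {G : DGraph} {P : G.V → ι} {G' : DGraph} {P' : G'.V → ι} {a : G.V}
    {a' : G'.V} (σ : InputIso G P G' P' a a') :
    Raw II MM G P a → Raw II MM G' P' a' :=
  fun F q' => tcast II MM σ.hr.symm (F (phaseIn MM σ q'))

/-- A virtual vector field on the network `(G, P)`, i.e. a section of the control bundle,
is smooth if each of its components is a smooth control system. -/
def IsSmoothSec (G : DGraph) [Fintype G.E] [DecidableEq G.V] (P : G.V → ι)
    (w : ∀ a, Raw II MM G P a) : Prop :=
  ∀ a, IsSmoothCtrl II MM G P a (w a)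

/-- A virtual vector field `w` on `(G, P)` is invariant under the symmetry groupoid if
`Ctrl(σ) (w a) = w b` for every isomorphism `σ : (I(a), P∘ξ_a) → (I(b), P∘ξ_b)` of input
networks.  Together with smoothness this cuts out `V(G,P) ⊆ S(G,P)`. -/
def IsInvariantSec (G : DGraph) (P : G.V → ι) (w : ∀ a, Raw II MM G P a) : Prop :=
  ∀ (a b : G.V) (σ : InputIso G P G P a b), ctrlMap II MM σ (w a) = w b

section PiModel

variable {κ : Type*} [Fintype κ] {E : κ → Type*} [∀ k, NormedAddCommGroup (E k)]
  [∀ k, NormedSpace ℝ (E k)] {H : κ → Type*} [∀ k, TopologicalSpace (H k)]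
  {I : ∀ k, ModelWithCorners ℝ (E k) (H k)}
  {M : κ → Type*} [∀ k, TopologicalSpace (M k)] [∀ k, ChartedSpace (H k) (M k)]
  {EN HN N : Type*} [NormedAddCommGroup EN] [NormedSpace ℝ EN] [TopologicalSpace HN]
  {J : ModelWithCorners ℝ EN HN} [TopologicalSpace N] [ChartedSpace HN N] {n : WithTop ℕ∞}

theorem extChartAt_pi (p : ∀ k, M k) :
    extChartAt (ModelWithCorners.pi I) p = PartialEquiv.pi fun k => extChartAt (I k) (p k) := by
  simp only [extChartAt, OpenPartialHomeomorph.extend, piChartedSpace_chartAt]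
  exact PartialEquiv.pi_trans _ _

theorem contMDiffAt_pi_iff {Φ : N → ∀ k, M k} {x : N} :
    ContMDiffAt J (ModelWithCorners.pi I) n Φ x ↔
      ∀ k, ContMDiffAt J (I k) n (fun y => Φ y k) x := by
  simp only [contMDiffAt_iff, continuousAt_pi, extChartAt_pi, contDiffWithinAt_pi, forall_and]
  rfl

theorem contMDiff_pi_iff {Φ : N → ∀ k, M k} :
    ContMDiff J (ModelWithCorners.pi I) n Φ ↔ ∀ k, ContMDiff J (I k) n (fun y => Φ y k) := by
  simp only [ContMDiff, contMDiffAt_pi_iff]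
  exact forall_comm

theorem contMDiff_apply_pi (k : κ) :
    ContMDiff (ModelWithCorners.pi I) (I k) n (fun p : ∀ k, M k => p k) :=
  contMDiff_pi_iff.mp contMDiff_id k

end PiModel

section PhaseIn

variable {M : ι → Type} {G G' G'' : DGraph} {P : G.V → ι} {P' : G'.V → ι} {P'' : G''.V → ι}
  {a : G.V} {a' : G'.V} {a'' : G''.V}

theorem phaseIn_comp (σ : InputIso G P G' P' a a') (τ : InputIso G' P' G'' P'' a' a'')
    (q : PIn M G'' P'' a'') : phaseIn M σ (phaseIn M τ q) = phaseIn M (σ.comp τ) q := by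
  refine Prod.ext ?_ (funext fun γ => ?_) <;> exact cast_cast _ _ _

theorem phaseIn_inv_phaseIn (σ : InputIso G P G' P' a a') (q : PIn M G' P' a') :
    phaseIn M σ.inv (phaseIn M σ q) = q := by
  refine Prod.ext (cast_cast _ _ _) (funext fun γ => ?_)
  exact eq_of_heq (((cast_heq _ _).trans (cast_heq _ _)).trans
    (congr_arg_heq q.2 (σ.e.apply_symm_apply γ)))

end PhaseIn

section Ctrl

variable {E : ι → Type} [∀ i, NormedAddCommGroup (E i)] [∀ i, NormedSpace ℝ (E i)]
  {H : ι → Type} [∀ i, TopologicalSpace (H i)] (I : ∀ i, ModelWithCorners ℝ (E i) (H i))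
  (M : ι → Type) [∀ i, TopologicalSpace (M i)] [∀ i, ChartedSpace (H i) (M i)]
  {G G' G'' : DGraph} {P : G.V → ι} {P' : G'.V → ι} {P'' : G''.V → ι}
  {a : G.V} {a' : G'.V} {a'' : G''.V} {n : WithTop ℕ∞}

theorem ctrlMap_comp (σ : InputIso G P G' P' a a') (τ : InputIso G' P' G'' P'' a' a'')
    (F : Raw I M G P a) : ctrlMap I M τ (ctrlMap I M σ F) = ctrlMap I M (σ.comp τ) F := by
  funext q
  exact eq_of_heq ((((cast_heq _ _).trans (cast_heq _ _)).trans
    (congr_arg_heq F (phaseIn_comp σ τ q))).trans (cast_heq _ _).symm)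

theorem ctrlMap_ctrlMap_inv (σ : InputIso G P G' P' a a') (F : Raw I M G' P' a') :
    ctrlMap I M σ (ctrlMap I M σ.inv F) = F := by
  funext q
  exact eq_of_heq (((cast_heq _ _).trans (cast_heq _ _)).trans
    (congr_arg_heq F (phaseIn_inv_phaseIn σ q)))

theorem ctrlMap_eq_of_forall_ctrlMap_eq_self {b : G.V} {F : Raw I M G P b}
    (hF : ∀ ρ : InputIso G P G P b b, ctrlMap I M ρ F = F) (σ τ : InputIso G P G' P' b a') :
    ctrlMap I M σ F = ctrlMap I M τ F := by
  calc ctrlMap I M σ F = ctrlMap I M σ (ctrlMap I M (τ.comp σ.inv) F) := by rw [hF]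
    _ = ctrlMap I M τ F := by rw [← ctrlMap_comp, ctrlMap_ctrlMap_inv]

theorem contMDiff_cast {i j : ι} (h : i = j) :
    ContMDiff (I i) (I j) n (cast (congrArg M h)) := by
  subst h
  exact contMDiff_id

theorem contMDiff_tangentBundle_cast [∀ i, IsManifold (I i) (⊤ : ℕ∞) (M i)] {i j : ι}
    (h : i = j) :
    ContMDiff (I i).tangent (I j).tangent n (fun x : TangentBundle (I i) (M i) =>
      (⟨cast (congrArg M h) x.1, tcast I M h x.2⟩ : TangentBundle (I j) (M j))) := by
  subst h
  exact contMDiff_id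

theorem contMDiff_phaseIn [Fintype G.E] [DecidableEq G.V] [Fintype G'.E] [DecidableEq G'.V]
    (σ : InputIso G P G' P' a a') :
    ContMDiff (PInModel I G' P' a') (PInModel I G P a) n (phaseIn M σ) :=
  ((contMDiff_cast I M σ.hr).comp contMDiff_fst).prodMk <| contMDiff_pi_iff.mpr fun γ =>
    (contMDiff_cast I M (σ.hl γ)).comp ((contMDiff_apply_pi (σ.e γ)).comp contMDiff_snd)

theorem IsSmoothCtrl.ctrlMap [∀ i, IsManifold (I i) (⊤ : ℕ∞) (M i)] [Fintype G.E]
    [DecidableEq G.V] [Fintype G'.E] [DecidableEq G'.V] (σ : InputIso G P G' P' a a')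
    {F : Raw I M G P a} (hF : IsSmoothCtrl I M G P a F) : IsSmoothCtrl I M G' P' a' (ctrlMap I M σ F) := by
  refine ((contMDiff_tangentBundle_cast I M σ.hr.symm).comp
    (hF.comp (contMDiff_phaseIn I M σ))).congr fun q => ?_
  have hbase : cast (congrArg M σ.hr.symm) (cast (congrArg M σ.hr) q.1) = q.1 := by
    rw [cast_cast, cast_eq]
  exact congrArg
    (fun x => (⟨x, _root_.ctrlMap I M σ F q⟩ : TangentBundle (I (P' a')) (M (P' a')))) hbase.symm

variable {A : Type} {ra : A → G.V}

theorem IsInvariantSec.eq_of_forall_rep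
    (hcomplete : ∀ a : G.V, ∃ i : A, Nonempty (InputIso G P G P a (ra i)))
    {w₁ w₂ : ∀ a, Raw I M G P a} (hw₁ : IsInvariantSec I M G P w₁)
    (hw₂ : IsInvariantSec I M G P w₂) (h : ∀ i, w₁ (ra i) = w₂ (ra i)) : w₁ = w₂ := by
  funext a
  obtain ⟨i, ⟨σ⟩⟩ := hcomplete a
  rw [← hw₁ _ _ σ.inv, ← hw₂ _ _ σ.inv, h]

theorem ctrlMap_rep_eq_ctrlMap_rep
    (hirr : ∀ i j : A, Nonempty (InputIso G P G P (ra i) (ra j)) → i = j)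
    {v : ∀ i, Raw I M G P (ra i)}
    (hv : ∀ i (ρ : InputIso G P G P (ra i) (ra i)), ctrlMap I M ρ (v i) = v i)
    {i j : A} (σ : InputIso G P G P (ra i) a) (τ : InputIso G P G P (ra j) a) :
    ctrlMap I M σ (v i) = ctrlMap I M τ (v j) := by
  obtain rfl := hirr i j ⟨σ.comp τ.inv⟩
  exact ctrlMap_eq_of_forall_ctrlMap_eq_self I M (hv i) σ τ

variable (hcomplete : ∀ a : G.V, ∃ i : A, Nonempty (InputIso G P G P a (ra i)))

noncomputable def extendFromReps (v : ∀ i, Raw I M G P (ra i)) (a : G.V) : Raw I M G P a :=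
  ctrlMap I M (hcomplete a).choose_spec.some.inv (v (hcomplete a).choose)

variable {v : ∀ i, Raw I M G P (ra i)}

theorem isInvariantSec_extendFromReps
    (hirr : ∀ i j : A, Nonempty (InputIso G P G P (ra i) (ra j)) → i = j)
    (hv : ∀ i (ρ : InputIso G P G P (ra i) (ra i)), ctrlMap I M ρ (v i) = v i) :
    IsInvariantSec I M G P (extendFromReps I M hcomplete v) := by
  intro _ _ τ
  rw [extendFromReps, extendFromReps, ctrlMap_comp]
  exact ctrlMap_rep_eq_ctrlMap_rep I M hirr hv _ _

theorem extendFromReps_rep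
    (hirr : ∀ i j : A, Nonempty (InputIso G P G P (ra i) (ra j)) → i = j)
    (hv : ∀ i (ρ : InputIso G P G P (ra i) (ra i)), ctrlMap I M ρ (v i) = v i) (i : A) :
    extendFromReps I M hcomplete v (ra i) = v i :=
  ctrlMap_rep_eq_ctrlMap_rep I M hirr hv _ (InputIso.refl G P (ra i))

theorem isSmoothSec_extendFromReps [∀ i, IsManifold (I i) (⊤ : ℕ∞) (M i)] [Fintype G.E]
    [DecidableEq G.V] (hv : ∀ i, IsSmoothCtrl I M G P (ra i) (v i)) :
    IsSmoothSec I M G P (extendFromReps I M hcomplete v) :=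
  fun _ => (hv _).ctrlMap I M _

end Ctrl

/-- **`V(G,P)` is the product of the fixed-vector subspaces over isomorphism classes.**
Let `(G,P)` be a network and let `ra : A → G.V` choose representatives of the isomorphism
classes of objects of the symmetry groupoid (every vertex is isomorphic to some
representative, and distinct representatives are non-isomorphic).  Then the restriction
map `w ↦ (w_{ra i})_i` is a linear isomorphism from the space `V(G,P)` of smooth
groupoid-invariant virtual vector fields onto the product over `i` of the subspaces of
`Ctrl(P I(ra i) → P (ra i))` fixed by the `Ctrl`-action of `Aut(ra i)`. -/
theorem invariant_sections_product_of_fixed_subspaces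
    {G : DGraph} [Fintype G.E] [DecidableEq G.V] {P : G.V → ι}
    (A : Type) (ra : A → G.V)
    (hcomplete : ∀ a : G.V, ∃ i : A, Nonempty (InputIso G P G P a (ra i)))
    (hirr : ∀ i j : A, Nonempty (InputIso G P G P (ra i) (ra j)) → i = j) :
    Function.Bijective
      (fun w : {w : ∀ a, Raw II MM G P a //
          IsSmoothSec II MM G P w ∧ IsInvariantSec II MM G P w} =>
        (⟨fun i => w.1 (ra i), fun i =>
            ⟨w.2.1 (ra i), fun σ => w.2.2 (ra i) (ra i) σ⟩⟩ :
          {v : ∀ i : A, Raw II MM G P (ra i) //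
            ∀ i, IsSmoothCtrl II MM G P (ra i) (v i) ∧
              ∀ σ : InputIso G P G P (ra i) (ra i), ctrlMap II MM σ (v i) = v i})) ∧
    (∀ w₁ w₂ : ∀ a, Raw II MM G P a,
      (fun i => (w₁ + w₂) (ra i)) = (fun i => w₁ (ra i)) + (fun i => w₂ (ra i))) ∧
    (∀ (c : ℝ) (w : ∀ a, Raw II MM G P a),
      (fun i => (c • w) (ra i)) = c • (fun i => w (ra i))) := by
  refine ⟨⟨?injective, ?surjective⟩, fun _ _ => rfl, fun _ _ => rfl⟩
  case injective =>
    rintro ⟨w₁, _, hw₁⟩ ⟨w₂, _, hw₂⟩ h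
    exact Subtype.ext <|
      hw₁.eq_of_forall_rep II MM hcomplete hw₂ (congrFun (congrArg Subtype.val h))
  case surjective =>
    rintro ⟨v, hv⟩
    have hfix i := (hv i).2
    exact ⟨⟨extendFromReps II MM hcomplete v,
        isSmoothSec_extendFromReps II MM hcomplete fun i => (hv i).1,
        isInvariantSec_extendFromReps II MM hcomplete hirr hfix⟩,
      Subtype.ext (funext (extendFromReps_rep II MM hcomplete hirr hfix))⟩
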